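/- Let A ∈ ℝ^{N×M}, let K ≤ rank(A), and let f > 1. Then there exists an index set 𝒮 of K distinct columns of A, with selection matrix S ∈ ℝ^{M×K}, such that log det(I_N + (AS)(AS)ᵀ) ≥ Σ_{j=1}^{K} log(1 + σ_j(A)² / (1 + f² K (M − K))). -/

import Mathlib

noncomputable section
open Matrix BigOperators Kronecker

/-- The selection matrix whose `j`-th column is the standard basis vector `e_{s j}`. -/
def selectionMatrix {M K : ℕ} (s : Fin K → Fin M) : Matrix (Fin M) (Fin K) ℝ :=
  Matrix.of fun i j => if s j = i then 1 else 0

/-- The singular values of a real matrix, arranged in decreasing order: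
the nonnegative square roots of the eigenvalues of `AᵀA`. -/
noncomputable def singularValues {N M : ℕ} (A : Matrix (Fin N) (Fin M) ℝ) : Fin M → ℝ :=
  fun j =>
    Real.sqrt ((show (Aᵀ * A).IsHermitian by
        simpa using Matrix.isHermitian_conjTranspose_mul_self A).eigenvalues
      (Tuple.sort (fun i => -(show (Aᵀ * A).IsHermitian by
        simpa using Matrix.isHermitian_conjTranspose_mul_self A).eigenvalues i) j))

/-- The spectral norm (largest singular value) of a real matrix. -/
noncomputable def specNorm {n m : ℕ} (B : Matrix (Fin n) (Fin m) ℝ) : ℝ :=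
  ⨆ j, singularValues B j

/-- `Ψ(B) = logdet(I + B Bᵀ)`. -/
noncomputable def Psi {n m : ℕ} (B : Matrix (Fin n) (Fin m) ℝ) : ℝ :=
  Real.log (1 + B * Bᵀ).det

/-- The expected information gain `φ_EIG` of the selection `s` for the matrix `A`:
`logdet(I_N + (AS)(AS)ᵀ)`. -/
noncomputable def phiEIG {N M K : ℕ} (A : Matrix (Fin N) (Fin M) ℝ) (s : Fin K → Fin M) : ℝ :=
  Psi (A * selectionMatrix s)



section Aux

open Finset Equiv

/-- principal minor of `H` at index set `U` -/
noncomputable def pminor {n : ℕ} (H : Matrix (Fin n) (Fin n) ℝ) (U : Finset (Fin n)) : ℝ :=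
  (H.submatrix (fun x : {x // x ∈ U} => (x : Fin n)) (fun x : {x // x ∈ U} => (x : Fin n))).det

lemma det_one_add_expand {n : ℕ} (H : Matrix (Fin n) (Fin n) ℝ) :
    (1 + H).det = ∑ U ∈ (Finset.univ : Finset (Fin n)).powerset, pminor H U := by
  classical
  rw [Matrix.det_apply']
  have h1 : ∀ σ : Equiv.Perm (Fin n), ∏ i, (1 + H) (σ i) i
      = ∑ U ∈ (Finset.univ : Finset (Fin n)).powerset,
          (∏ i ∈ U, H (σ i) i) * ∏ i ∈ Finset.univ \ U, (if σ i = i then (1:ℝ) else 0) := by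
    intro σ
    rw [← Finset.prod_add]
    refine Finset.prod_congr rfl fun i _ => ?_
    simp [Matrix.one_apply, add_comm, eq_comm]
  calc (∑ σ : Equiv.Perm (Fin n), Equiv.Perm.sign σ * ∏ i, (1 + H) (σ i) i : ℝ)
      = ∑ σ : Equiv.Perm (Fin n), ∑ U ∈ (Finset.univ : Finset (Fin n)).powerset,
          (Equiv.Perm.sign σ : ℝ) * ((∏ i ∈ U, H (σ i) i) *
            ∏ i ∈ Finset.univ \ U, (if σ i = i then (1:ℝ) else 0)) := by
        refine Finset.sum_congr rfl fun σ _ => ?_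
        rw [h1 σ, Finset.mul_sum]
    _ = ∑ U ∈ (Finset.univ : Finset (Fin n)).powerset, ∑ σ : Equiv.Perm (Fin n),
          (Equiv.Perm.sign σ : ℝ) * ((∏ i ∈ U, H (σ i) i) *
            ∏ i ∈ Finset.univ \ U, (if σ i = i then (1:ℝ) else 0)) := Finset.sum_comm
    _ = ∑ U ∈ (Finset.univ : Finset (Fin n)).powerset, pminor H U := by
        refine Finset.sum_congr rfl fun U _ => ?_
        have h2 : ∀ σ : Equiv.Perm (Fin n),
            (∏ i ∈ Finset.univ \ U, (if σ i = i then (1:ℝ) else 0))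
              = if (∀ i, i ∉ U → σ i = i) then (1:ℝ) else 0 := by
          intro σ
          rw [Finset.prod_boole]
          congr 1
          simp only [eq_iff_iff]
          constructor
          · intro h i hi; exact h i (by simp [hi])
          · intro h i hi; exact h i (by simpa using hi)
        simp_rw [h2, mul_ite, mul_one, mul_zero, ← Finset.sum_filter]
        rw [Finset.sum_subtype (p := fun σ : Equiv.Perm (Fin n) => ∀ i ∉ U, σ i = i)
            (Finset.univ.filter (fun σ : Equiv.Perm (Fin n) => ∀ i ∉ U, σ i = i)) (by simp)
            (fun σ => (Equiv.Perm.sign σ : ℝ) * ∏ i ∈ U, H (σ i) i)]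
        have key : ∑ σ : {f : Equiv.Perm (Fin n) // ∀ a, a ∉ U → f a = a},
              (Equiv.Perm.sign (σ : Equiv.Perm (Fin n)) : ℝ) * ∏ i ∈ U, H ((σ : Equiv.Perm (Fin n)) i) i
            = ∑ τ : Equiv.Perm {x // x ∈ U},
              (Equiv.Perm.sign τ : ℝ) * ∏ x : {x // x ∈ U}, H (τ x) x := by
          refine (Fintype.sum_equiv (Equiv.Perm.subtypeEquivSubtypePerm (· ∈ U)) _ _ ?_).symm
          intro τ
          have hcoe : ((Equiv.Perm.subtypeEquivSubtypePerm (· ∈ U) τ : { f : Equiv.Perm (Fin n) // ∀ a, ¬ a ∈ U → f a = a}) : Equiv.Perm (Fin n))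
              = Equiv.Perm.ofSubtype τ := rfl
          have hprod : ∏ i ∈ U, H ((Equiv.Perm.ofSubtype τ) i) i
              = ∏ x : {x // x ∈ U}, H (τ x) x := by
            rw [← Finset.prod_coe_sort U (fun i => H (Equiv.Perm.ofSubtype τ i) i)]
            exact Finset.prod_congr rfl fun x _ => by rw [Equiv.Perm.ofSubtype_apply_coe]
          rw [hcoe, Equiv.Perm.sign_ofSubtype, hprod]
        rw [key, pminor, Matrix.det_apply']
        rfl

lemma pminor_smul {n : ℕ} (H : Matrix (Fin n) (Fin n) ℝ) (y : ℝ) (U : Finset (Fin n)) :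
    pminor (y • H) U = y ^ U.card * pminor H U := by
  unfold pminor
  have h : (y • H).submatrix (fun x : {x // x ∈ U} => (x : Fin n))
        (fun x : {x // x ∈ U} => (x : Fin n))
      = y • (H.submatrix (fun x : {x // x ∈ U} => (x : Fin n))
        (fun x : {x // x ∈ U} => (x : Fin n))) := rfl
  rw [h, Matrix.det_smul, Fintype.card_coe]

lemma eval_identity {n : ℕ} (G : Matrix (Fin n) (Fin n) ℝ) (hG : G.IsHermitian) (y : ℝ) :
    Matrix.det (1 + y • (1 + G)) = ∏ i, (1 + y * (1 + hG.eigenvalues i)) := by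
  classical
  set Q := (hG.eigenvectorUnitary : Matrix (Fin n) (Fin n) ℝ) with hQdef
  have hQ1 : Q * star Q = 1 := (Matrix.mem_unitaryGroup_iff).mp hG.eigenvectorUnitary.2
  have hQ2 : star Q * Q = 1 := (Matrix.mem_unitaryGroup_iff').mp hG.eigenvectorUnitary.2
  have hdiag : star Q * G * Q = Matrix.diagonal (RCLike.ofReal ∘ hG.eigenvalues) :=
    by
      have h := Matrix.IsHermitian.conjStarAlgAut_star_eigenvectorUnitary hG
      rwa [Unitary.conjStarAlgAut_star_apply] at h
  have key : star Q * (1 + y • (1 + G)) * Q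
      = Matrix.diagonal (fun i => 1 + y * (1 + hG.eigenvalues i)) := by
    have expand : (1 : Matrix (Fin n) (Fin n) ℝ) + y • (1 + G) = (1 + y) • 1 + y • G := by
      rw [smul_add, add_smul, one_smul]; abel
    rw [expand, Matrix.mul_add, Matrix.add_mul, Matrix.mul_smul, Matrix.mul_smul,
      Matrix.smul_mul, Matrix.smul_mul, Matrix.mul_one, hQ2, hdiag]
    ext i j
    by_cases h : i = j <;>
      simp [h, Matrix.diagonal_apply, Matrix.one_apply, Matrix.add_apply] <;> ring
  have hdet : (star Q * (1 + y • (1 + G)) * Q).det = (1 + y • (1 + G)).det := by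
    rw [Matrix.det_mul, Matrix.det_mul, mul_comm, ← mul_assoc, ← Matrix.det_mul, hQ1]
    simp
  rw [← hdet, key, Matrix.det_diagonal]

lemma sum_pminor_eq {n K : ℕ} (G : Matrix (Fin n) (Fin n) ℝ) (hG : G.IsHermitian) :
    ∑ U ∈ (Finset.univ : Finset (Fin n)).powersetCard K, pminor (1 + G) U
      = ∑ U ∈ (Finset.univ : Finset (Fin n)).powersetCard K,
          ∏ i ∈ U, (1 + hG.eigenvalues i) := by
  classical
  set ν := fun i => 1 + hG.eigenvalues i with hν
  have hpoly : (∑ U ∈ (Finset.univ : Finset (Fin n)).powerset,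
        Polynomial.C (pminor (1+G) U) * Polynomial.X ^ U.card)
      = ∑ U ∈ (Finset.univ : Finset (Fin n)).powerset,
        Polynomial.C (∏ i ∈ U, ν i) * Polynomial.X ^ U.card := by
    apply Polynomial.funext
    intro y
    simp only [Polynomial.eval_finset_sum, Polynomial.eval_mul, Polynomial.eval_C,
      Polynomial.eval_pow, Polynomial.eval_X]
    calc ∑ U ∈ (Finset.univ : Finset (Fin n)).powerset, pminor (1+G) U * y ^ U.card
        = ∑ U ∈ (Finset.univ : Finset (Fin n)).powerset, pminor (y • (1+G)) U := by
          refine Finset.sum_congr rfl fun U _ => ?_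
          rw [pminor_smul, mul_comm]
      _ = (1 + y • (1+G)).det := (det_one_add_expand _).symm
      _ = ∏ i, (1 + y * ν i) := eval_identity G hG y
      _ = ∑ U ∈ (Finset.univ : Finset (Fin n)).powerset, (∏ i ∈ U, ν i) * y ^ U.card := by
          have : ∀ i ∈ (Finset.univ : Finset (Fin n)), 1 + y * ν i = y * ν i + 1 := by
            intro i _; ring
          rw [Finset.prod_congr rfl this, Finset.prod_add]
          refine Finset.sum_congr rfl fun U _ => ?_
          rw [Finset.prod_const_one, mul_one, Finset.prod_mul_distrib, Finset.prod_const,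
            mul_comm (y ^ U.card)]
  have hcoeff := congrArg (fun p => Polynomial.coeff p K) hpoly
  simp only [Polynomial.finset_sum_coeff, Polynomial.coeff_C_mul, Polynomial.coeff_X_pow,
    mul_ite, mul_one, mul_zero] at hcoeff
  have conv1 : ∀ (g : Finset (Fin n) → ℝ),
      (∑ U ∈ (Finset.univ : Finset (Fin n)).powerset, if K = U.card then g U else 0)
        = ∑ U ∈ (Finset.univ : Finset (Fin n)).powersetCard K, g U := by
    intro g
    rw [Finset.powersetCard_eq_filter, Finset.sum_filter]
    refine Finset.sum_congr rfl fun U _ => ?_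
    by_cases h : U.card = K
    · simp [h]
    · rw [if_neg (fun hK => h hK.symm), if_neg h]
  rw [conv1, conv1] at hcoeff
  exact hcoeff

lemma choose_le_aux (Mn K : ℕ) (hK : K ≤ Mn) :
    ∀ t, t ≤ K → Nat.choose Mn K ≤ Nat.choose (Mn - t) (K - t) * (1 + K * (Mn - K)) ^ t := by
  intro t
  induction t with
  | zero => intro _; simp
  | succ t ih =>
    intro ht
    have ht' : t ≤ K := by omega
    refine (ih ht').trans ?_
    have h1 : K - t = (K - (t+1)) + 1 := by omega
    have h2 : Mn - t = (Mn - (t+1)) + 1 := by omega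
    set c := 1 + K * (Mn - K) with hc
    set j := K - (t+1) with hj
    set m := Mn - (t+1) with hm
    rw [h1, h2, pow_succ, ← mul_assoc]
    have key : Nat.choose (m+1) (j+1) * (j+1) = (m+1) * Nat.choose m j :=
      (Nat.add_one_mul_choose_eq m j).symm
    have hle : (m+1) ≤ c * (j+1) := by
      have hK1 : 1 ≤ K := by omega
      have hj1 : (Mn - K) ≤ K * (Mn - K) * (j+1) := by
        calc Mn - K = 1 * (Mn - K) * 1 := by ring
          _ ≤ K * (Mn - K) * (j+1) :=
            Nat.mul_le_mul (Nat.mul_le_mul_right _ hK1) (by omega)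
      calc m + 1 = (j+1) + (Mn - K) := by omega
        _ ≤ (j+1) + K * (Mn - K) * (j+1) := Nat.add_le_add_left hj1 _
        _ = c * (j+1) := by rw [hc]; ring
    have step : Nat.choose (m+1) (j+1) ≤ Nat.choose m j * c := by
      have h3 : Nat.choose (m+1) (j+1) * (j+1) ≤ (Nat.choose m j * c) * (j+1) := by
        rw [key]
        calc (m+1) * Nat.choose m j ≤ (c * (j+1)) * Nat.choose m j :=
              Nat.mul_le_mul_right _ hle
          _ = (Nat.choose m j * c) * (j+1) := by ring
      exact Nat.le_of_mul_le_mul_right h3 (by omega)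
    calc Nat.choose (m+1) (j+1) * c ^ t ≤ (Nat.choose m j * c) * c ^ t :=
          Nat.mul_le_mul_right _ step
      _ = Nat.choose m j * c ^ t * c := by ring

lemma count_supersets {n K : ℕ} (U : Finset (Fin n)) (hUK : U.card ≤ K) :
    (((Finset.univ : Finset (Fin n)).powersetCard K).filter (fun T => U ⊆ T)).card
      = Nat.choose (n - U.card) (K - U.card) := by
  classical
  have htarget : ((Uᶜ : Finset (Fin n)).powersetCard (K - U.card)).card
      = Nat.choose (n - U.card) (K - U.card) := by
    rw [Finset.card_powersetCard, Finset.card_compl, Fintype.card_fin]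
  rw [← htarget]
  apply Finset.card_bij' (fun T _ => T \ U) (fun V _ => V ∪ U)
  · intro T hT
    rw [Finset.mem_filter, Finset.mem_powersetCard_univ] at hT
    rw [Finset.mem_powersetCard]
    refine ⟨fun x hx => ?_, ?_⟩
    · rw [Finset.mem_compl]; exact (Finset.mem_sdiff.mp hx).2
    · rw [Finset.card_sdiff_of_subset hT.2, hT.1]
  · intro V hV
    rw [Finset.mem_powersetCard] at hV
    rw [Finset.mem_filter, Finset.mem_powersetCard_univ]
    have hdisj : Disjoint V U := by
      rw [Finset.disjoint_right]
      intro x hxU hxV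
      exact (Finset.mem_compl.mp (hV.1 hxV)) hxU
    constructor
    · rw [Finset.card_union_of_disjoint hdisj, hV.2]; omega
    · exact Finset.subset_union_right
  · intro T hT
    rw [Finset.mem_filter] at hT
    exact Finset.sdiff_union_of_subset hT.2
  · intro V hV
    rw [Finset.mem_powersetCard] at hV
    have hdisj : Disjoint V U := by
      rw [Finset.disjoint_right]
      intro x hxU hxV
      exact (Finset.mem_compl.mp (hV.1 hxV)) hxU
    rw [Finset.union_sdiff_cancel_right hdisj]

lemma main_count_bound {n K : ℕ} (μ : Fin n → ℝ) (hμ : ∀ i, 0 ≤ μ i) (S : Finset (Fin n))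
    (hS : S.card = K) (hK : K ≤ n) (c : ℝ) (hc : ((1 + K * (n - K) : ℕ) : ℝ) ≤ c) :
    (n.choose K : ℝ) * ∏ i ∈ S, (1 + μ i / c)
      ≤ ∑ T ∈ (Finset.univ : Finset (Fin n)).powersetCard K, ∏ i ∈ T, (1 + μ i) := by
  classical
  have hc0 : (0:ℝ) < c := lt_of_lt_of_le (by positivity) hc
  -- expand the right side
  have hexp : ∀ T : Finset (Fin n), ∏ i ∈ T, (1 + μ i) = ∑ U ∈ T.powerset, ∏ i ∈ U, μ i := by
    intro T
    have h1 : ∀ i ∈ T, (1:ℝ) + μ i = μ i + 1 := fun i _ => by ring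
    rw [Finset.prod_congr rfl h1, Finset.prod_add]
    exact Finset.sum_congr rfl fun U _ => by rw [Finset.prod_const_one, mul_one]
  have hpowfil : ∀ T : Finset (Fin n),
      T.powerset = (Finset.univ : Finset (Fin n)).powerset.filter (· ⊆ T) := by
    intro T; ext V
    simp [Finset.mem_powerset, Finset.subset_univ]
  have hswap : ∑ T ∈ (Finset.univ : Finset (Fin n)).powersetCard K, ∏ i ∈ T, (1 + μ i)
      = ∑ U ∈ (Finset.univ : Finset (Fin n)).powerset,
          ((((Finset.univ : Finset (Fin n)).powersetCard K).filter
            (fun T => U ⊆ T)).card : ℝ) * ∏ i ∈ U, μ i := by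
    calc ∑ T ∈ (Finset.univ : Finset (Fin n)).powersetCard K, ∏ i ∈ T, (1 + μ i)
        = ∑ T ∈ (Finset.univ : Finset (Fin n)).powersetCard K,
            ∑ U ∈ (Finset.univ : Finset (Fin n)).powerset,
              (if U ⊆ T then ∏ i ∈ U, μ i else 0) := by
          refine Finset.sum_congr rfl fun T _ => ?_
          rw [hexp T, hpowfil T, Finset.sum_filter]
      _ = ∑ U ∈ (Finset.univ : Finset (Fin n)).powerset,
            ∑ T ∈ (Finset.univ : Finset (Fin n)).powersetCard K,
              (if U ⊆ T then ∏ i ∈ U, μ i else 0) := Finset.sum_comm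
      _ = _ := by
          refine Finset.sum_congr rfl fun U _ => ?_
          rw [← Finset.sum_filter, Finset.sum_const, nsmul_eq_mul]
  rw [hswap]
  -- expand the left side
  have hleft : ∏ i ∈ S, (1 + μ i / c)
      = ∑ U ∈ S.powerset, (∏ i ∈ U, μ i) / c ^ U.card := by
    have h1 : ∀ i ∈ S, (1:ℝ) + μ i / c = μ i / c + 1 := fun i _ => by ring
    rw [Finset.prod_congr rfl h1, Finset.prod_add]
    refine Finset.sum_congr rfl fun U _ => ?_
    rw [Finset.prod_const_one, mul_one, Finset.prod_div_distrib, Finset.prod_const]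
  rw [hleft, Finset.mul_sum]
  refine le_trans (Finset.sum_le_sum ?_) (Finset.sum_le_sum_of_subset_of_nonneg
    (Finset.powerset_mono.mpr (Finset.subset_univ S)) ?_)
  · intro U hU
    rw [Finset.mem_powerset] at hU
    have ht : U.card ≤ K := hS ▸ Finset.card_le_card hU
    rw [count_supersets U ht]
    have hnat := choose_le_aux n K hK U.card ht
    have hprod0 : (0:ℝ) ≤ ∏ i ∈ U, μ i := Finset.prod_nonneg fun i _ => hμ i
    have hcast : (n.choose K : ℝ)
        ≤ ((n - U.card).choose (K - U.card) : ℝ) * c ^ U.card := by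
      calc (n.choose K : ℝ) ≤ (((n - U.card).choose (K - U.card) * (1 + K * (n - K)) ^ U.card : ℕ) : ℝ) :=
            Nat.cast_le.mpr hnat
        _ = ((n - U.card).choose (K - U.card) : ℝ) * (((1 + K * (n - K) : ℕ) : ℝ)) ^ U.card := by
            push_cast; ring
        _ ≤ ((n - U.card).choose (K - U.card) : ℝ) * c ^ U.card := by
            refine mul_le_mul_of_nonneg_left (pow_le_pow_left₀ (by positivity) hc _) ?_
            positivity
    rw [div_eq_mul_inv, ← mul_assoc]
    calc (n.choose K : ℝ) * (∏ i ∈ U, μ i) * (c ^ U.card)⁻¹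
        ≤ ((n - U.card).choose (K - U.card) : ℝ) * c ^ U.card * (∏ i ∈ U, μ i) * (c ^ U.card)⁻¹ := by
          refine mul_le_mul_of_nonneg_right (mul_le_mul_of_nonneg_right hcast hprod0) ?_
          positivity
      _ = ((n - U.card).choose (K - U.card) : ℝ) * (∏ i ∈ U, μ i) := by
          field_simp
  · intro U _ _
    have hprod0 : (0:ℝ) ≤ ∏ i ∈ U, μ i := Finset.prod_nonneg fun i _ => hμ i
    exact mul_nonneg (Nat.cast_nonneg _) hprod0

lemma exists_subset_bound {n K : ℕ} (G : Matrix (Fin n) (Fin n) ℝ) (hG : G.IsHermitian)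
    (hμ : ∀ i, 0 ≤ hG.eigenvalues i) (hK : K ≤ n) (S : Finset (Fin n)) (hS : S.card = K)
    (c : ℝ) (hc : ((1 + K * (n - K) : ℕ) : ℝ) ≤ c) :
    ∃ s : Fin K → Fin n, Function.Injective s ∧
      ∏ i ∈ S, (1 + hG.eigenvalues i / c) ≤ (1 + G.submatrix s s).det := by
  classical
  have hne : ((Finset.univ : Finset (Fin n)).powersetCard K).Nonempty := by
    rw [Finset.powersetCard_nonempty]
    simpa using hK
  have hsum : ∑ _T ∈ (Finset.univ : Finset (Fin n)).powersetCard K,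
        (∏ i ∈ S, (1 + hG.eigenvalues i / c))
      ≤ ∑ T ∈ (Finset.univ : Finset (Fin n)).powersetCard K, pminor (1 + G) T := by
    rw [Finset.sum_const, Finset.card_powersetCard, Finset.card_univ, Fintype.card_fin,
      nsmul_eq_mul, sum_pminor_eq G hG]
    exact main_count_bound hG.eigenvalues hμ S hS hK c hc
  obtain ⟨T, hTmem, hTle⟩ := Finset.exists_le_of_sum_le hne hsum
  have hTcard : T.card = K := (Finset.mem_powersetCard_univ).mp hTmem
  set e := T.orderIsoOfFin hTcard with he
  refine ⟨fun j => (e j : Fin n), ?_, ?_⟩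
  · exact Subtype.coe_injective.comp (fun a b hab => e.injective hab)
  · have hsub : (1 + G).submatrix (fun j => ((e j : {x // x ∈ T}) : Fin n))
          (fun j => ((e j : {x // x ∈ T}) : Fin n))
        = ((1 + G).submatrix (fun x : {x // x ∈ T} => (x : Fin n))
            (fun x : {x // x ∈ T} => (x : Fin n))).submatrix
          (⇑e.toEquiv) (⇑e.toEquiv) := rfl
    have hdet : ((1 + G).submatrix (fun j => ((e j : {x // x ∈ T}) : Fin n))
          (fun j => ((e j : {x // x ∈ T}) : Fin n))).det = pminor (1 + G) T := by
      rw [hsub, Matrix.det_submatrix_equiv_self e.toEquiv]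
      rfl
    have hone : (1 + G).submatrix (fun j => ((e j : {x // x ∈ T}) : Fin n))
          (fun j => ((e j : {x // x ∈ T}) : Fin n))
        = 1 + G.submatrix (fun j => ((e j : {x // x ∈ T}) : Fin n))
            (fun j => ((e j : {x // x ∈ T}) : Fin n)) := by
      have hinj : Function.Injective (fun j : Fin K => ((e j : {x // x ∈ T}) : Fin n)) :=
        Subtype.coe_injective.comp (fun a b hab => e.injective hab)
      ext i j
      simp [Matrix.submatrix_apply, Matrix.add_apply, Matrix.one_apply, hinj.eq_iff]
    rw [← hone, hdet]
    exact hTle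


lemma selection_conj {m K : ℕ} (G : Matrix (Fin m) (Fin m) ℝ) (s : Fin K → Fin m) :
    (selectionMatrix s)ᵀ * G * selectionMatrix s = G.submatrix s s := by
  ext j k
  simp only [Matrix.mul_apply, Matrix.transpose_apply, selectionMatrix, Matrix.of_apply,
    Matrix.submatrix_apply, ite_mul, one_mul, zero_mul, mul_ite, mul_one, mul_zero]
  rw [Finset.sum_ite_eq Finset.univ (s k) (fun i => ∑ l, if s j = l then G l i else 0)]
  simp [Finset.sum_ite_eq]

end Aux

/-- Existence of a selection of `K` columns with
`logdet(I_N + (AS)(AS)ᵀ) ≥ ∑_{j=1}^K log(1 + σ_j(A)² / (1 + f² K (M − K)))`. -/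
theorem exists_selection_eig_lower_bound {N M K : ℕ} (A : Matrix (Fin N) (Fin M) ℝ)
    (hK : K ≤ A.rank) (f : ℝ) (hf : 1 < f) :
    ∃ s : Fin K → Fin M, Function.Injective s ∧
      ∑ j : Fin K,
          Real.log (1 + singularValues A (Fin.castLE (hK.trans A.rank_le_width) j) ^ 2 /
            (1 + f ^ 2 * K * ((M : ℝ) - K))) ≤
        Real.log (1 + (A * selectionMatrix s) * (A * selectionMatrix s)ᵀ).det := by
  classical
  have hKM : K ≤ M := hK.trans A.rank_le_width
  set hG := Matrix.isHermitian_conjTranspose_mul_self A with hGdef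
  set μ : Fin M → ℝ := hG.eigenvalues with hμdef
  have hμ0 : ∀ i, 0 ≤ μ i := fun i => Matrix.eigenvalues_conjTranspose_mul_self_nonneg A i
  set c : ℝ := 1 + f ^ 2 * (K : ℝ) * ((M : ℝ) - K) with hcdef
  have hfsq : (1:ℝ) ≤ f ^ 2 := by nlinarith
  have hMK0 : (0:ℝ) ≤ (M:ℝ) - K := by
    have := (Nat.cast_le (α := ℝ)).mpr hKM
    linarith
  have hc : ((1 + K * (M - K) : ℕ) : ℝ) ≤ c := by
    push_cast [Nat.cast_sub hKM]
    have h1 : (0:ℝ) ≤ (K:ℝ) * ((M:ℝ) - K) := mul_nonneg (Nat.cast_nonneg K) hMK0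
    have h2 : (K:ℝ) * ((M:ℝ) - K) ≤ f ^ 2 * (K : ℝ) * ((M:ℝ) - K) := by nlinarith
    rw [hcdef]
    linarith
  have hc1 : (1:ℝ) ≤ c := le_trans (by exact_mod_cast Nat.one_le_iff_ne_zero.mpr (by positivity)) hc
  have hc0 : (0:ℝ) < c := lt_of_lt_of_le one_pos hc1
  set π := Tuple.sort (fun i => -μ i) with hπdef
  set sstar : Fin K → Fin M := fun j => π (Fin.castLE hKM j) with hsstardef
  have hsinj : Function.Injective sstar := by
    intro a b hab
    exact (Fin.strictMono_castLE hKM).injective (π.injective hab)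
  set S : Finset (Fin M) := Finset.image sstar Finset.univ with hSdef
  have hScard : S.card = K := by
    rw [hSdef, Finset.card_image_of_injective _ hsinj, Finset.card_univ, Fintype.card_fin]
  obtain ⟨s, hsinj', hsle⟩ := exists_subset_bound (Aᴴ * A) hG hμ0 hKM S hScard c hc
  refine ⟨s, hsinj', ?_⟩
  have hsv : ∀ j : Fin K,
      (singularValues A (Fin.castLE (hK.trans A.rank_le_width) j)) ^ 2 = μ (sstar j) := by
    intro j
    rw [singularValues]
    exact Real.sq_sqrt (hμ0 _)
  have hfac : ∀ j : Fin K, (0:ℝ) <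
      1 + (singularValues A (Fin.castLE (hK.trans A.rank_le_width) j)) ^ 2 / c := by
    intro j
    have := div_nonneg (sq_nonneg (singularValues A (Fin.castLE (hK.trans A.rank_le_width) j))) hc0.le
    linarith
  have hdetEq : (1 + (A * selectionMatrix s) * (A * selectionMatrix s)ᵀ).det
      = (1 + (Aᴴ * A).submatrix s s).det := by
    rw [Matrix.transpose_mul, Matrix.det_one_add_mul_comm]
    congr 1
    rw [Matrix.mul_assoc ((selectionMatrix s)ᵀ) Aᵀ (A * selectionMatrix s),
      ← Matrix.mul_assoc Aᵀ A (selectionMatrix s), ← Matrix.mul_assoc, selection_conj,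
      Matrix.conjTranspose_eq_transpose_of_trivial]
  have hprodle : ∏ j : Fin K,
        (1 + (singularValues A (Fin.castLE (hK.trans A.rank_le_width) j)) ^ 2 / c)
      ≤ (1 + (A * selectionMatrix s) * (A * selectionMatrix s)ᵀ).det := by
    rw [hdetEq]
    refine le_trans (le_of_eq ?_) hsle
    rw [hSdef, Finset.prod_image (fun a _ b _ hab => hsinj hab)]
    exact Finset.prod_congr rfl fun j _ => by rw [hsv j]
  have hprodpos : (0:ℝ) < ∏ j : Fin K,
      (1 + (singularValues A (Fin.castLE (hK.trans A.rank_le_width) j)) ^ 2 / c) :=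
    Finset.prod_pos fun j _ => hfac j
  rw [← Real.log_prod (fun j _ =>
    ne_of_gt (hfac j) :
    ∀ j ∈ (Finset.univ : Finset (Fin K)),
      (1 + (singularValues A (Fin.castLE (hK.trans A.rank_le_width) j)) ^ 2 / c) ≠ 0)]
  exact Real.log_le_log hprodpos hprodle
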